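/- For a positive integer n and j ∈ {1,…,2n} with j ≥ 2, the continued fraction of √(n²+j) has period of length 2 if and only if j divides 2n, in which case √(n²+j) = [n; 2n/j, 2n repeated]. -/

import Mathlib

/-- The sequence of complete quotients of the continued fraction algorithm. -/
noncomputable def cfX (x : ℝ) : ℕ → ℝ
  | 0 => x
  | n + 1 =>
    if cfX x n - ⌊cfX x n⌋ = 0 then 0 else 1 / (cfX x n - ⌊cfX x n⌋)

/-- The partial quotients (continued fraction expansion) of a real number. -/
noncomputable def cfA (x : ℝ) (n : ℕ) : ℤ := ⌊cfX x n⌋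

/-!
Let `s = √(n² + j)`, so `n < s < n + 1` and the first complete quotient is `(s + n) / j`.
If `j ∣ 2n`, the complete quotients alternate between `(s + n) / j` and `s + n`, with partial
quotients `2n / j` and `2n`. Conversely, if the partial quotients from index `1` on have period `2`,
so do the complete quotients, since two irrationals with the same expansion coincide. Then
`t = (s + n) / j` is a root of both `j t² = 2n t + 1` and `b t² = a b t + a`, where `a`, `b` are
the first two partial quotients after `n`. As `t` is irrational the two quadratics are
proportional, which forces `j a = 2n`.
-/

section ContinuedFraction

variable {x y : ℝ}

theorem cfX_cfX (x : ℝ) (k : ℕ) : ∀ m, cfX (cfX x k) m = cfX x (k + m)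
  | 0 => rfl
  | m + 1 => by simp only [cfX, cfX_cfX x k m]; rfl

theorem cfA_cfX (x : ℝ) (k m : ℕ) : cfA (cfX x k) m = cfA x (k + m) :=
  congrArg _ (cfX_cfX x k m)

theorem cfX_add_mul_of_cfX_add_eq {m p : ℕ} (h : cfX x (m + p) = cfX x m) :
    ∀ k i, cfX x (m + p * k + i) = cfX x (m + i)
  | 0, i => by rw [mul_zero, add_zero]
  | k + 1, i => by
    rw [show m + p * (k + 1) + i = m + p + (p * k + i) by ring, ← cfX_cfX, h, cfX_cfX, ← add_assoc,
      cfX_add_mul_of_cfX_add_eq h k i]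

theorem irrational_cfX (hx : Irrational x) : ∀ m, Irrational (cfX x m)
  | 0 => hx
  | m + 1 => by
    have hfract := (irrational_cfX hx m).sub_intCast ⌊cfX x m⌋
    simp only [cfX, if_neg hfract.ne_zero, one_div]
    exact hfract.inv

theorem cfX_succ (hx : Irrational x) (m : ℕ) : cfX x (m + 1) = (cfX x m - cfA x m)⁻¹ := by
  simp only [cfX, if_neg ((irrational_cfX hx m).sub_intCast _).ne_zero, one_div, cfA]

theorem cfX_eq_cfA_add_inv (hx : Irrational x) (m : ℕ) : cfX x m = cfA x m + (cfX x (m + 1))⁻¹ := by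
  rw [cfX_succ hx, inv_inv, add_sub_cancel]

theorem one_lt_cfX_succ (hx : Irrational x) (m : ℕ) : 1 < cfX x (m + 1) := by
  have hfract : 0 < cfX x m - cfA x m :=
    (Int.fract_nonneg _).lt_of_ne ((irrational_cfX hx m).sub_intCast _).ne_zero.symm
  rw [cfX_succ hx]
  exact one_lt_inv_iff₀.mpr ⟨hfract, Int.fract_lt_one _⟩

theorem one_le_cfA_succ (hx : Irrational x) (m : ℕ) : 1 ≤ cfA x (m + 1) :=
  Int.le_floor.mpr (by exact_mod_cast (one_lt_cfX_succ hx m).le)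

theorem two_le_cfX_succ_mul_cfX_succ_succ (hx : Irrational x) (m : ℕ) :
    2 ≤ cfX x (m + 1) * cfX x (m + 2) := by
  have hX := one_lt_cfX_succ hx (m + 1)
  have ha : (1 : ℝ) ≤ cfA x (m + 1) := by exact_mod_cast one_le_cfA_succ hx m
  rw [cfX_eq_cfA_add_inv hx (m + 1), add_mul, inv_mul_cancel₀ (by positivity)]
  nlinarith

theorem abs_cfX_sub_cfX_mul (hx : Irrational x) (hy : Irrational y) {m : ℕ}
    (h : cfA x m = cfA y m) :
    |cfX x m - cfX y m| * (cfX x (m + 1) * cfX y (m + 1)) = |cfX x (m + 1) - cfX y (m + 1)| := by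
  have hX := one_lt_cfX_succ hx m
  have hY := one_lt_cfX_succ hy m
  have hXY : 0 < cfX x (m + 1) * cfX y (m + 1) := by nlinarith
  rw [cfX_eq_cfA_add_inv hx m, cfX_eq_cfA_add_inv hy m, h, add_sub_add_left_eq_sub,
    inv_sub_inv (by positivity) (by positivity), abs_div, abs_of_pos hXY,
    div_mul_cancel₀ _ hXY.ne', abs_sub_comm]

-- The distance between the `m`-th complete quotients at least quadruples every two steps, yet
-- stays below `1`.
theorem eq_of_cfA_eq (hx : Irrational x) (hy : Irrational y) (h : ∀ m, cfA x m = cfA y m) :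
    x = y := by
  set d : ℕ → ℝ := fun m ↦ |cfX x m - cfX y m|
  have hgrow : ∀ m, d m * 4 ≤ d (m + 2) := by
    intro m
    have hxx := two_le_cfX_succ_mul_cfX_succ_succ hx m
    have hyy := two_le_cfX_succ_mul_cfX_succ_succ hy m
    have hd : d (m + 2) = d m * ((cfX x (m + 1) * cfX x (m + 2)) * (cfX y (m + 1) * cfX y (m + 2))) := by
      simp only [d, ← abs_cfX_sub_cfX_mul hx hy (h m), ← abs_cfX_sub_cfX_mul hx hy (h (m + 1))]
      ring
    rw [hd]
    gcongr
    nlinarith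
  have hpow : ∀ k, d 0 * 4 ^ k ≤ d (2 * k) := by
    intro k
    induction k with
    | zero => simp
    | succ k ih =>
      calc d 0 * 4 ^ (k + 1) = d 0 * 4 ^ k * 4 := by ring
        _ ≤ d (2 * k) * 4 := by gcongr
        _ ≤ d (2 * (k + 1)) := hgrow _
  have hlt : ∀ m, d m < 1 := fun m ↦ Int.abs_sub_lt_one_of_floor_eq_floor (h m)
  have hd0 : d 0 = 0 := by
    by_contra hne
    have hpos : 0 < d 0 := (abs_nonneg _).lt_of_ne' hne
    obtain ⟨k, hk⟩ := pow_unbounded_of_one_lt (d 0)⁻¹ (by norm_num : (1 : ℝ) < 4)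
    have := (hpow k).trans_lt (hlt _)
    rw [inv_lt_iff_one_lt_mul₀ hpos] at hk
    linarith
  exact sub_eq_zero.mp (abs_eq_zero.mp hd0)

theorem cfX_add_two_eq_of_cfA_add_two_eq (hx : Irrational x) {m : ℕ}
    (hper : ∀ i, cfA x (m + 2 + i) = cfA x (m + i)) : cfX x (m + 2) = cfX x m :=
  eq_of_cfA_eq (irrational_cfX hx _) (irrational_cfX hx _) fun i ↦ by
    rw [cfA_cfX, cfA_cfX, hper]

theorem cfA_two_mul_sq_eq_of_cfX_three_eq (hx : Irrational x) (h : cfX x 3 = cfX x 1) :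
    cfA x 2 * cfX x 1 ^ 2 = cfA x 1 * cfA x 2 * cfX x 1 + cfA x 1 := by
  have h1 : cfX x 1 = cfA x 1 + (cfX x 2)⁻¹ := cfX_eq_cfA_add_inv hx 1
  have h2 : cfX x 2 = cfA x 2 + (cfX x 1)⁻¹ := h ▸ cfX_eq_cfA_add_inv hx 2
  have hX1 : cfX x 1 ≠ 0 := (zero_lt_one.trans (one_lt_cfX_succ hx 0)).ne'
  have hX2 : cfX x 2 ≠ 0 := (zero_lt_one.trans (one_lt_cfX_succ hx 1)).ne'
  field_simp at h1 h2
  linear_combination cfX x 1 * h1 - (cfX x 1 - cfA x 1) * h2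

end ContinuedFraction

theorem Irrational.eq_zero_of_intCast_mul_eq_intCast {t : ℝ} (ht : Irrational t) {c d : ℤ}
    (h : c * t = d) : c = 0 := by
  by_contra hc
  exact (ht.intCast_mul hc).ne_int d h

theorem irrational_sqrt_sq_add {n j : ℕ} (hj0 : 0 < j) (hj : j ≤ 2 * n) :
    Irrational √((n : ℝ) ^ 2 + j) := by
  rw [show (n : ℝ) ^ 2 + j = ((n * n + j : ℕ) : ℝ) by push_cast; ring, irrational_sqrt_natCast_iff]
  rintro ⟨r, hr⟩
  exact Nat.not_exists_sq (m := n) (by omega) (by nlinarith) ⟨r, hr.symm⟩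

theorem floor_sqrt_sq_add {n j : ℕ} (hj : j ≤ 2 * n) : ⌊√((n : ℝ) ^ 2 + j)⌋ = n := by
  rw [show (n : ℝ) ^ 2 + j = ((n * n + j : ℕ) : ℝ) by push_cast; ring,
    Real.floor_real_sqrt_eq_nat_sqrt, Nat.sqrt_add_eq n (by omega)]

section QuadraticSurd

variable {n j : ℕ} {s : ℝ}

theorem cfX_one_of_sq_eq (hs : Irrational s) (hsq : s ^ 2 = n ^ 2 + j) (hfl : ⌊s⌋ = n)
    (hj : 0 < j) : cfX s 1 = (s + n) / j := by
  have hsn : s - n ≠ 0 := (hs.sub_natCast n).ne_zero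
  rw [cfX_succ hs, cfA, cfX, hfl, Int.cast_natCast]
  field_simp
  linear_combination -hsq

theorem dvd_of_cfA_add_two_eq (hs : Irrational s) (hsq : s ^ 2 = n ^ 2 + j) (hfl : ⌊s⌋ = n)
    (hj : 0 < j) (hper : ∀ m, 1 ≤ m → cfA s (m + 2) = cfA s m) : j ∣ 2 * n := by
  set t := cfX s 1
  set a := cfA s 1
  set b := cfA s 2
  have hquad : (j : ℝ) * t ^ 2 = 2 * n * t + 1 := by
    rw [show t = (s + n) / j from cfX_one_of_sq_eq hs hsq hfl hj]
    field_simp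
    linear_combination hsq
  have h31 : cfX s 3 = t :=
    cfX_add_two_eq_of_cfA_add_two_eq hs fun i ↦ by rw [add_right_comm, hper _ (by omega)]
  have hab : (b : ℝ) * t ^ 2 = a * b * t + a := cfA_two_mul_sq_eq_of_cfX_three_eq hs h31
  have hlin : ((j * a * b - 2 * n * b : ℤ) : ℝ) * t = (b - j * a : ℤ) := by
    push_cast
    linear_combination b * hquad - (j : ℝ) * hab
  have hzero := (irrational_cfX hs 1).eq_zero_of_intCast_mul_eq_intCast hlin
  have hb : 0 < b := one_le_cfA_succ hs 1
  have hja : (j : ℤ) * a = (2 * n : ℕ) := by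
    push_cast
    nlinarith
  exact Int.natCast_dvd_natCast.mp ⟨a, hja.symm⟩

theorem cfA_one_of_sq_eq (hs : Irrational s) (hsq : s ^ 2 = n ^ 2 + j) (hfl : ⌊s⌋ = n)
    (hj : 0 < j) {q : ℕ} (hq : q * j = 2 * n) : cfA s 1 = q := by
  have hqj : (q : ℝ) * j = 2 * n := by exact_mod_cast hq
  have hs_lo : (n : ℝ) ≤ s := by exact_mod_cast hfl ▸ Int.floor_le s
  have hs_hi : s < n + 1 := by exact_mod_cast hfl ▸ Int.lt_floor_add_one s
  have hj1 : (1 : ℝ) ≤ j := by exact_mod_cast hj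
  rw [cfA, cfX_one_of_sq_eq hs hsq hfl hj, Int.floor_eq_iff, Int.cast_natCast,
    le_div_iff₀ (by positivity), div_lt_iff₀ (by positivity)]
  constructor <;> linarith

theorem cfX_two_of_sq_eq (hs : Irrational s) (hsq : s ^ 2 = n ^ 2 + j) (hfl : ⌊s⌋ = n)
    (hj : 0 < j) {q : ℕ} (hq : q * j = 2 * n) : cfX s 2 = s + n := by
  have hqj : (q : ℝ) * j = 2 * n := by exact_mod_cast hq
  have hsn : s - n ≠ 0 := (hs.sub_natCast n).ne_zero
  have hfract : (s + n) / j - q = (s - n) / j := by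
    field_simp
    linarith
  rw [cfX_succ hs, cfA_one_of_sq_eq hs hsq hfl hj hq, cfX_one_of_sq_eq hs hsq hfl hj,
    Int.cast_natCast, hfract, inv_div, div_eq_iff hsn]
  linear_combination -hsq

theorem cfA_two_of_sq_eq (hs : Irrational s) (hsq : s ^ 2 = n ^ 2 + j) (hfl : ⌊s⌋ = n)
    (hj : 0 < j) {q : ℕ} (hq : q * j = 2 * n) : cfA s 2 = 2 * n := by
  rw [cfA, cfX_two_of_sq_eq hs hsq hfl hj hq, Int.floor_add_natCast, hfl]
  ring

theorem cfX_three_of_sq_eq (hs : Irrational s) (hsq : s ^ 2 = n ^ 2 + j) (hfl : ⌊s⌋ = n)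
    (hj : 0 < j) {q : ℕ} (hq : q * j = 2 * n) : cfX s 3 = cfX s 1 := by
  rw [cfX_succ hs, cfA_two_of_sq_eq hs hsq hfl hj hq, cfX_two_of_sq_eq hs hsq hfl hj hq,
    cfX_succ hs, cfA, cfX, hfl]
  push_cast
  ring

theorem cfA_add_two_mul_of_sq_eq (hs : Irrational s) (hsq : s ^ 2 = n ^ 2 + j) (hfl : ⌊s⌋ = n)
    (hj : 0 < j) {q : ℕ} (hq : q * j = 2 * n) (k i : ℕ) : cfA s (1 + 2 * k + i) = cfA s (1 + i) :=
  congrArg Int.floor <| cfX_add_mul_of_cfX_add_eq (m := 1) (p := 2)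
    (cfX_three_of_sq_eq hs hsq hfl hj hq) k i

end QuadraticSurd

theorem Nat.sInf_eq_two {P : Set ℕ} (h0 : 0 ∉ P) (h1 : 1 ∉ P) (h2 : 2 ∈ P) : sInf P = 2 := by
  have hmem := Nat.sInf_mem ⟨2, h2⟩
  have hle := Nat.sInf_le h2
  interval_cases h : sInf P
  · exact absurd hmem h0
  · exact absurd hmem h1
  · rfl

theorem sqrt_period_two_iff_general (n j : ℕ) (hj1 : 2 ≤ j) (hj2 : j ≤ 2 * n) :
    (sInf {p : ℕ | 0 < p ∧ ∀ m : ℕ, 1 ≤ m →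
        cfA (Real.sqrt ((n : ℝ) ^ 2 + (j : ℝ))) (m + p) = cfA (Real.sqrt ((n : ℝ) ^ 2 + (j : ℝ))) m} = 2 ↔ j ∣ 2 * n) ∧
      (j ∣ 2 * n → cfA (Real.sqrt ((n : ℝ) ^ 2 + (j : ℝ))) 0 = n ∧
        ∀ k : ℕ, cfA (Real.sqrt ((n : ℝ) ^ 2 + (j : ℝ))) (2 * k + 1) = (2 * n / j : ℕ) ∧
          cfA (Real.sqrt ((n : ℝ) ^ 2 + (j : ℝ))) (2 * k + 2) = 2 * n) := by
  set s := √((n : ℝ) ^ 2 + j)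
  have hj : 0 < j := by omega
  have hs : Irrational s := irrational_sqrt_sq_add hj hj2
  have hsq : s ^ 2 = n ^ 2 + j := Real.sq_sqrt (by positivity)
  have hfl : ⌊s⌋ = n := floor_sqrt_sq_add hj2
  have hvalues (hdvd : j ∣ 2 * n) (k : ℕ) :
      cfA s (2 * k + 1) = (2 * n / j : ℕ) ∧ cfA s (2 * k + 2) = 2 * n := by
    have hq := Nat.div_mul_cancel hdvd
    rw [show 2 * k + 1 = 1 + 2 * k + 0 by ring, show 2 * k + 2 = 1 + 2 * k + 1 by ring,
      cfA_add_two_mul_of_sq_eq hs hsq hfl hj hq, cfA_add_two_mul_of_sq_eq hs hsq hfl hj hq]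
    exact ⟨cfA_one_of_sq_eq hs hsq hfl hj hq, cfA_two_of_sq_eq hs hsq hfl hj hq⟩
  refine ⟨⟨fun hmin ↦ ?_, fun hdvd ↦ ?_⟩, fun hdvd ↦ ⟨hfl, hvalues hdvd⟩⟩
  · have h2 := Nat.sInf_mem (Nat.nonempty_of_pos_sInf (hmin ▸ two_pos))
    rw [hmin] at h2
    exact dvd_of_cfA_add_two_eq hs hsq hfl hj h2.2
  · have hq := Nat.div_mul_cancel hdvd
    refine Nat.sInf_eq_two (fun h0 ↦ h0.1.false) (fun ⟨_, hper⟩ ↦ ?_) ⟨two_pos, fun m hm ↦ ?_⟩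
    · have h21 := hper 1 le_rfl
      rw [cfA_two_of_sq_eq hs hsq hfl hj hq, cfA_one_of_sq_eq hs hsq hfl hj hq] at h21
      have : 2 * n / j < 2 * n := Nat.div_lt_self (by omega) hj1
      omega
    · obtain ⟨i, rfl⟩ := Nat.exists_eq_add_of_le hm
      rw [add_right_comm]
      exact cfA_add_two_mul_of_sq_eq hs hsq hfl hj hq 1 i

/-- For `j ≥ 2`, the continued fraction of `√(n²+j)` has period of length 2 iff
`j ∣ 2n`, in which case `√(n²+j) = [n; 2n/j, 2n repeated]`. -/
theorem sqrt_period_two_iff (n j : ℕ) (hn : 0 < n) (hj1 : 2 ≤ j) (hj2 : j ≤ 2 * n) :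
    (sInf {p : ℕ | 0 < p ∧ ∀ m : ℕ, 1 ≤ m →
        cfA (Real.sqrt ((n : ℝ) ^ 2 + (j : ℝ))) (m + p) = cfA (Real.sqrt ((n : ℝ) ^ 2 + (j : ℝ))) m} = 2 ↔ j ∣ 2 * n) ∧
      (j ∣ 2 * n → cfA (Real.sqrt ((n : ℝ) ^ 2 + (j : ℝ))) 0 = n ∧
        ∀ k : ℕ, cfA (Real.sqrt ((n : ℝ) ^ 2 + (j : ℝ))) (2 * k + 1) = (2 * n / j : ℕ) ∧
          cfA (Real.sqrt ((n : ℝ) ^ 2 + (j : ℝ))) (2 * k + 2) = 2 * n) :=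
  sqrt_period_two_iff_general n j hj1 hj2
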